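/- The squared 2-Wasserstein distance between two probability measures on ℝ with finite second moments equals the integral over (0,1) of the squared difference of their quantile functions: W₂²(μ,ν) = ∫₀¹ |F_μ^{-1}(t) − F_ν^{-1}(t)|² dt, where F_μ^{-1}(t) = inf{x : F_μ(x) ≥ t}. -/

import Mathlib

open MeasureTheory

/-- The squared 2-Wasserstein cost: infimum of `∫ dist(x,y)²` over all couplings. -/
noncomputable def W2sq {X : Type*} [MeasurableSpace X] [PseudoMetricSpace X]
    (μ ν : Measure X) : ℝ :=
  sInf {c : ℝ | ∃ γ : Measure (X × X),
    γ.map Prod.fst = μ ∧ γ.map Prod.snd = ν ∧ c = ∫ p, dist p.1 p.2 ^ 2 ∂γ}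

/-- Generalized inverse CDF (quantile function): `F_μ⁻¹(t) = inf {x | F_μ(x) ≥ t}`. -/
noncomputable def invCDF (μ : Measure ℝ) (t : ℝ) : ℝ :=
  sInf {x : ℝ | ENNReal.ofReal t ≤ μ (Set.Iic x)}

/-!
For a coupling `γ` of `μ` and `ν` the cost is `∫ x² dμ + ∫ y² dν - 2 ∫ xy dγ`, so an optimal
coupling maximises `∫ xy dγ`. Hoeffding's identity `x = ∫ (1{s < x} - 1{s < 0}) ds`, applied to
both coordinates and integrated against `γ` by Fubini, writes `∫ xy dγ` as the integral over
`(s, t)` of `γ((s, ∞) × (t, ∞))` plus terms depending only on the marginals. The quadrant mass is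
at most `min (μ (s, ∞)) (ν (t, ∞))`, and the quantile coupling, the law of `(F_μ⁻¹ U, F_ν⁻¹ U)` for
`U` uniform on `(0, 1)`, attains this bound for every `(s, t)`; its cost is the right-hand side.
-/

open Set Filter ProbabilityTheory

section Quantile

variable {μ : Measure ℝ} {t x : ℝ}

lemma invCDF_eq_sInf (μ : Measure ℝ) [IsProbabilityMeasure μ] (t : ℝ) :
    invCDF μ t = sInf {x | t ≤ cdf μ x} := by
  simp_rw [invCDF, ← ofReal_cdf, ENNReal.ofReal_le_ofReal_iff (cdf_nonneg μ _)]

lemma nonempty_le_cdf (ht : t < 1) : {x | t ≤ cdf μ x}.Nonempty :=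
  (((tendsto_cdf_atTop μ).eventually_const_lt ht).exists).imp fun _ hx => hx.le

lemma bddBelow_le_cdf (ht : 0 < t) : BddBelow {x | t ≤ cdf μ x} := by
  obtain ⟨x₀, hx₀⟩ := ((tendsto_cdf_atBot μ).eventually_lt_const ht).exists
  exact ⟨x₀, fun y hy => le_of_not_gt fun hyx => (hy.trans (monotone_cdf μ hyx.le)).not_gt hx₀⟩

variable [IsProbabilityMeasure μ]

lemma le_cdf_invCDF (ht : 0 < t) (ht1 : t < 1) : t ≤ cdf μ (invCDF μ t) := by
  rw [invCDF_eq_sInf]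
  set a := sInf {x | t ≤ cdf μ x}
  have hIoi : Ioi a ⊆ {x | t ≤ cdf μ x} := fun x hx => by
    obtain ⟨y, hy, hyx⟩ := (csInf_lt_iff (bddBelow_le_cdf ht) (nonempty_le_cdf ht1)).mp hx
    exact hy.trans (monotone_cdf μ hyx.le)
  exact ge_of_tendsto
    ((cdf μ).right_continuous a |>.mono_left (nhdsWithin_mono a Ioi_subset_Ici_self))
    (eventually_nhdsWithin_of_forall hIoi)

lemma invCDF_le_iff (ht : 0 < t) (ht1 : t < 1) : invCDF μ t ≤ x ↔ t ≤ cdf μ x :=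
  ⟨fun h => (le_cdf_invCDF ht ht1).trans (monotone_cdf μ h),
    fun h => (invCDF_eq_sInf μ t).trans_le (csInf_le (bddBelow_le_cdf ht) h)⟩

lemma lt_invCDF_iff (ht : 0 < t) (ht1 : t < 1) : x < invCDF μ t ↔ cdf μ x < t := by
  simpa only [not_le] using (invCDF_le_iff ht ht1).not

lemma monotoneOn_invCDF : MonotoneOn (invCDF μ) (Ioo 0 1) := fun _ h₁ _ h₂ h12 =>
  (invCDF_le_iff h₁.1 h₁.2).2 (h12.trans (le_cdf_invCDF h₂.1 h₂.2))

lemma Ioo_inter_preimage_invCDF_Iic (x : ℝ) :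
    Ioo 0 1 ∩ invCDF μ ⁻¹' Iic x = Ioo 0 1 ∩ Iic (cdf μ x) := by
  ext u
  exact and_congr_right fun hu => invCDF_le_iff hu.1 hu.2

lemma Ioo_inter_preimage_invCDF_Ioi (x : ℝ) :
    Ioo 0 1 ∩ invCDF μ ⁻¹' Ioi x = Ioo 0 1 ∩ Ioi (cdf μ x) := by
  ext u
  exact and_congr_right fun hu => lt_invCDF_iff hu.1 hu.2

lemma aemeasurable_invCDF : AEMeasurable (invCDF μ) (volume.restrict (Ioo 0 1)) :=
  aemeasurable_restrict_of_monotoneOn measurableSet_Ioo monotoneOn_invCDF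

variable (μ) in
theorem map_invCDF : (volume.restrict (Ioo 0 1)).map (invCDF μ) = μ := by
  refine (Measure.ext_of_Iic _ _ fun x => ?_).symm
  rw [Measure.map_apply_of_aemeasurable aemeasurable_invCDF measurableSet_Iic,
    Measure.restrict_apply' measurableSet_Ioo, inter_comm, Ioo_inter_preimage_invCDF_Iic,
    inter_comm, ← Measure.restrict_apply measurableSet_Iic,
    Measure.restrict_congr_set Ioo_ae_eq_Ioc,
    Measure.restrict_apply measurableSet_Iic, inter_comm, Ioc_inter_Iic, Real.volume_Ioc,
    min_eq_right (cdf_le_one μ x), sub_zero, ofReal_cdf]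

end Quantile

noncomputable def quantileCoupling (μ ν : Measure ℝ) : Measure (ℝ × ℝ) :=
  (volume.restrict (Ioo 0 1)).map fun u => (invCDF μ u, invCDF ν u)

instance (μ ν : Measure ℝ) : IsFiniteMeasure (quantileCoupling μ ν) := by
  unfold quantileCoupling; infer_instance

section QuantileCoupling

variable (μ ν : Measure ℝ) [IsProbabilityMeasure μ] [IsProbabilityMeasure ν]

lemma aemeasurable_invCDF_prodMk :
    AEMeasurable (fun u => (invCDF μ u, invCDF ν u)) (volume.restrict (Ioo 0 1)) :=
  aemeasurable_invCDF.prodMk aemeasurable_invCDF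

lemma quantileCoupling_map_fst : (quantileCoupling μ ν).map Prod.fst = μ := by
  rw [quantileCoupling, AEMeasurable.map_map_of_aemeasurable measurable_fst.aemeasurable
    (aemeasurable_invCDF_prodMk μ ν)]
  exact map_invCDF μ

lemma quantileCoupling_map_snd : (quantileCoupling μ ν).map Prod.snd = ν := by
  rw [quantileCoupling, AEMeasurable.map_map_of_aemeasurable measurable_snd.aemeasurable
    (aemeasurable_invCDF_prodMk μ ν)]
  exact map_invCDF ν

lemma measure_Ioi_eq_restrict_Ioo (x : ℝ) :
    μ (Ioi x) = volume.restrict (Ioo 0 1) (Ioi (cdf μ x)) := by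
  nth_rw 1 [← map_invCDF μ]
  rw [Measure.map_apply_of_aemeasurable aemeasurable_invCDF measurableSet_Ioi,
    Measure.restrict_apply' measurableSet_Ioo, Measure.restrict_apply' measurableSet_Ioo,
    inter_comm, Ioo_inter_preimage_invCDF_Ioi, inter_comm]

/-- Both `{u | s < F_μ⁻¹ u}` and `{u | t < F_ν⁻¹ u}` are final segments of `(0,1)`, hence nested. -/
theorem quantileCoupling_Ioi_prod_Ioi (s t : ℝ) :
    quantileCoupling μ ν (Ioi s ×ˢ Ioi t) = min (μ (Ioi s)) (ν (Ioi t)) := by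
  have hanti : Antitone fun c => volume.restrict (Ioo (0 : ℝ) 1) (Ioi c) :=
    fun _ _ h => measure_mono (Ioi_subset_Ioi h)
  rw [quantileCoupling, Measure.map_apply_of_aemeasurable (aemeasurable_invCDF_prodMk μ ν)
      (measurableSet_Ioi.prod measurableSet_Ioi), mk_preimage_prod,
    Measure.restrict_apply' measurableSet_Ioo, inter_comm, ← inter_self (Ioo 0 1),
    inter_inter_inter_comm, Ioo_inter_preimage_invCDF_Ioi, Ioo_inter_preimage_invCDF_Ioi,
    inter_inter_inter_comm, inter_self, Ioi_inter_Ioi, inter_comm,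
    ← Measure.restrict_apply' measurableSet_Ioo, hanti.map_max,
    measure_Ioi_eq_restrict_Ioo μ, measure_Ioi_eq_restrict_Ioo ν]

lemma integral_dist_sq_quantileCoupling :
    ∫ p, dist p.1 p.2 ^ 2 ∂quantileCoupling μ ν =
      ∫ t in Ioo (0 : ℝ) 1, |invCDF μ t - invCDF ν t| ^ 2 := by
  rw [quantileCoupling, integral_map (aemeasurable_invCDF_prodMk μ ν)
    ((measurable_fst.dist measurable_snd).pow_const 2).aestronglyMeasurable]
  simp only [Real.dist_eq]

end QuantileCoupling

noncomputable def signedStep (x s : ℝ) : ℝ := (Iio x).indicator 1 s - (Iio 0).indicator 1 s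

lemma signedStep_eq_indicator_sub_indicator (x : ℝ) :
    signedStep x = (Ico 0 x).indicator 1 - (Ico x 0).indicator 1 := by
  ext s
  simp only [signedStep, Pi.sub_apply, indicator_apply, mem_Iio, mem_Ico, Pi.one_apply]
  split_ifs <;> grind

lemma signedStep_eq_indicator_Ioi_sub (x s : ℝ) :
    signedStep x s = (Ioi s).indicator 1 x - (Iio 0).indicator 1 s := by
  simp only [signedStep, indicator_apply, mem_Iio, mem_Ioi, Pi.one_apply]

lemma abs_signedStep (x s : ℝ) : |signedStep x s| = (Ico (min x 0) (max x 0)).indicator 1 s := by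
  simp only [signedStep, indicator_apply, mem_Iio, mem_Ico, Pi.one_apply]
  split_ifs <;> grind

lemma integrable_indicator_one_Ico (a b : ℝ) : Integrable ((Ico a b).indicator (1 : ℝ → ℝ)) :=
  (integrable_indicator_iff measurableSet_Ico).2 (integrableOn_const measure_Ico_lt_top.ne)

lemma integrable_signedStep (x : ℝ) : Integrable (signedStep x) := by
  rw [signedStep_eq_indicator_sub_indicator]
  exact (integrable_indicator_one_Ico 0 x).sub (integrable_indicator_one_Ico x 0)

lemma integral_signedStep (x : ℝ) : ∫ s, signedStep x s = x := by
  rw [signedStep_eq_indicator_sub_indicator, integral_sub' (integrable_indicator_one_Ico 0 x)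
    (integrable_indicator_one_Ico x 0), integral_indicator_one measurableSet_Ico,
    integral_indicator_one measurableSet_Ico, Real.volume_real_Ico, Real.volume_real_Ico,
    sub_zero, zero_sub, max_zero_sub_max_neg_zero_eq_self]

lemma integral_abs_signedStep (x : ℝ) : ∫ s, |signedStep x s| = |x| := by
  simp_rw [abs_signedStep, integral_indicator_one measurableSet_Ico,
    Real.volume_real_Ico_of_le min_le_max, max_sub_min_eq_abs', sub_zero]

lemma measurable_signedStep : Measurable fun p : ℝ × ℝ => signedStep p.1 p.2 :=
  (measurable_const.indicator (measurableSet_lt measurable_snd measurable_fst)).sub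
    ((measurable_const.indicator measurableSet_Iio).comp measurable_snd)

section Hoeffding

variable {γ : Measure (ℝ × ℝ)}

lemma integrable_signedStep_mul_signedStep [SFinite γ]
    (h : Integrable (fun p => p.1 * p.2) γ) :
    Integrable (fun q : (ℝ × ℝ) × ℝ × ℝ => signedStep q.1.1 q.2.1 * signedStep q.1.2 q.2.2)
      (γ.prod volume) := by
  have hmeas : Measurable fun q : (ℝ × ℝ) × ℝ × ℝ =>
      signedStep q.1.1 q.2.1 * signedStep q.1.2 q.2.2 :=
    (measurable_signedStep.comp (f := fun q : (ℝ × ℝ) × ℝ × ℝ => (q.1.1, q.2.1)) (by fun_prop)).mul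
      (measurable_signedStep.comp (f := fun q : (ℝ × ℝ) × ℝ × ℝ => (q.1.2, q.2.2)) (by fun_prop))
  refine (integrable_prod_iff hmeas.aestronglyMeasurable).2
    ⟨.of_forall fun p => ?_, h.norm.congr (.of_forall fun p => ?_)⟩
  · rw [Measure.volume_eq_prod]
    exact (integrable_signedStep p.1).mul_prod (integrable_signedStep p.2)
  · simp only [norm_mul, Real.norm_eq_abs]
    rw [Measure.volume_eq_prod,
      integral_prod_mul (fun s => |signedStep p.1 s|) (fun t => |signedStep p.2 t|),
      integral_abs_signedStep, integral_abs_signedStep]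

/-- Hoeffding's identity `xy = ∬ signedStep x s * signedStep y t`, integrated against `γ`. -/
theorem integral_mul_eq_integral_integral_signedStep [SFinite γ]
    (h : Integrable (fun p => p.1 * p.2) γ) :
    ∫ p, p.1 * p.2 ∂γ = ∫ st : ℝ × ℝ, ∫ p, signedStep p.1 st.1 * signedStep p.2 st.2 ∂γ := by
  have hxy (p : ℝ × ℝ) : p.1 * p.2 = ∫ st : ℝ × ℝ, signedStep p.1 st.1 * signedStep p.2 st.2 := by
    rw [Measure.volume_eq_prod, integral_prod_mul (signedStep p.1) (signedStep p.2),
      integral_signedStep, integral_signedStep]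
  simp_rw [hxy]
  exact integral_integral_swap (integrable_signedStep_mul_signedStep h)

lemma integral_signedStep_mul_signedStep [IsFiniteMeasure γ] (s t : ℝ) :
    ∫ p, signedStep p.1 s * signedStep p.2 t ∂γ =
      γ.real (Ioi s ×ˢ Ioi t) - (Iio 0).indicator 1 t * (γ.map Prod.fst).real (Ioi s)
        - (Iio 0).indicator 1 s * (γ.map Prod.snd).real (Ioi t)
        + (Iio 0).indicator 1 s * (Iio 0).indicator 1 t * γ.real univ := by
  set a : ℝ := (Iio 0).indicator 1 s
  set b : ℝ := (Iio 0).indicator 1 t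
  have hexpand (p : ℝ × ℝ) : signedStep p.1 s * signedStep p.2 t =
      (Ioi s ×ˢ Ioi t).indicator 1 p - b * (Ioi s ×ˢ univ).indicator 1 p
        - a * (univ ×ˢ Ioi t).indicator 1 p + a * b := by
    rw [signedStep_eq_indicator_Ioi_sub, signedStep_eq_indicator_Ioi_sub, ← Prod.mk.eta (p := p),
      indicator_prod_one, indicator_prod_one, indicator_prod_one, indicator_univ]
    simp only [Pi.one_apply, a, b]
    ring
  have hind {S : Set (ℝ × ℝ)} (hS : MeasurableSet S) : Integrable (S.indicator 1) γ :=
    (integrable_indicator_iff hS).2 (integrable_const (1 : ℝ)).integrableOn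
  have hR : MeasurableSet (Ioi s ×ˢ Ioi t) := measurableSet_Ioi.prod measurableSet_Ioi
  have hS : MeasurableSet (Ioi s ×ˢ (univ : Set ℝ)) := measurableSet_Ioi.prod .univ
  have hT : MeasurableSet ((univ : Set ℝ) ×ˢ Ioi t) := MeasurableSet.univ.prod measurableSet_Ioi
  have hRS : Integrable (fun p => (Ioi s ×ˢ Ioi t).indicator 1 p
      - b * (Ioi s ×ˢ univ).indicator 1 p) γ := (hind hR).sub ((hind hS).const_mul b)
  have hRST : Integrable (fun p => (Ioi s ×ˢ Ioi t).indicator 1 p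
      - b * (Ioi s ×ˢ univ).indicator 1 p - a * (univ ×ˢ Ioi t).indicator 1 p) γ :=
    hRS.sub ((hind hT).const_mul a)
  simp_rw [hexpand]
  rw [integral_add hRST (integrable_const _), integral_sub hRS ((hind hT).const_mul a),
    integral_sub (hind hR) ((hind hS).const_mul b), integral_const_mul, integral_const_mul,
    integral_indicator_one hR, integral_indicator_one hS, integral_indicator_one hT, integral_const,
    map_measureReal_apply measurable_fst measurableSet_Ioi,
    map_measureReal_apply measurable_snd measurableSet_Ioi, prod_univ, univ_prod, smul_eq_mul]
  ring

end Hoeffding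

section Comparison

variable {γ γ' : Measure (ℝ × ℝ)} [IsFiniteMeasure γ] [IsFiniteMeasure γ']

lemma integral_signedStep_mul_signedStep_le (hfst : γ.map Prod.fst = γ'.map Prod.fst)
    (hsnd : γ.map Prod.snd = γ'.map Prod.snd) {s t : ℝ}
    (hst : γ (Ioi s ×ˢ Ioi t) ≤ γ' (Ioi s ×ˢ Ioi t)) :
    ∫ p, signedStep p.1 s * signedStep p.2 t ∂γ ≤ ∫ p, signedStep p.1 s * signedStep p.2 t ∂γ' := by
  have huniv : γ.real univ = γ'.real univ := by
    simpa [map_measureReal_apply measurable_fst .univ] using congrArg (·.real univ) hfst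
  rw [integral_signedStep_mul_signedStep, integral_signedStep_mul_signedStep, hfst, hsnd, huniv]
  gcongr
  exact ENNReal.toReal_mono (measure_ne_top _ _) hst

theorem integral_mul_le_of_forall_Ioi_prod_Ioi_le (hfst : γ.map Prod.fst = γ'.map Prod.fst)
    (hsnd : γ.map Prod.snd = γ'.map Prod.snd) (h : Integrable (fun p => p.1 * p.2) γ)
    (h' : Integrable (fun p => p.1 * p.2) γ')
    (hst : ∀ s t, γ (Ioi s ×ˢ Ioi t) ≤ γ' (Ioi s ×ˢ Ioi t)) :
    ∫ p, p.1 * p.2 ∂γ ≤ ∫ p, p.1 * p.2 ∂γ' := by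
  rw [integral_mul_eq_integral_integral_signedStep h,
    integral_mul_eq_integral_integral_signedStep h']
  exact integral_mono (integrable_signedStep_mul_signedStep h).integral_prod_right
    (integrable_signedStep_mul_signedStep h').integral_prod_right
    fun st => integral_signedStep_mul_signedStep_le hfst hsnd (hst st.1 st.2)

end Comparison

lemma measure_prod_le_min_map {γ : Measure (ℝ × ℝ)} {A B : Set ℝ} (hA : MeasurableSet A)
    (hB : MeasurableSet B) : γ (A ×ˢ B) ≤ min (γ.map Prod.fst A) (γ.map Prod.snd B) := by
  rw [Measure.map_apply measurable_fst hA, Measure.map_apply measurable_snd hB]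
  exact le_min (measure_mono fun p hp => hp.1) (measure_mono fun p hp => hp.2)

section Cost

variable {μ ν : Measure ℝ} {γ : Measure (ℝ × ℝ)}

lemma integrable_fst_mul_snd (h₁ : γ.map Prod.fst = μ) (h₂ : γ.map Prod.snd = ν)
    (hμ : Integrable (fun x => x ^ 2) μ) (hν : Integrable (fun x => x ^ 2) ν) :
    Integrable (fun p => p.1 * p.2) γ := by
  subst h₁ h₂
  have hfst : Integrable (fun p : ℝ × ℝ => p.1 ^ 2) γ := hμ.comp_measurable measurable_fst
  have hsnd : Integrable (fun p : ℝ × ℝ => p.2 ^ 2) γ := hν.comp_measurable measurable_snd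
  refine (hfst.add hsnd).mono (by fun_prop) (.of_forall fun p => ?_)
  simp only [norm_mul, Real.norm_eq_abs, Pi.add_apply]
  nlinarith [sq_abs p.1, sq_abs p.2, sq_nonneg (|p.1| - |p.2|), le_abs_self (p.1 ^ 2 + p.2 ^ 2)]

lemma integral_dist_sq_eq_of_map (h₁ : γ.map Prod.fst = μ) (h₂ : γ.map Prod.snd = ν)
    (hμ : Integrable (fun x => x ^ 2) μ) (hν : Integrable (fun x => x ^ 2) ν) :
    ∫ p, dist p.1 p.2 ^ 2 ∂γ = ∫ x, x ^ 2 ∂μ + ∫ y, y ^ 2 ∂ν - 2 * ∫ p, p.1 * p.2 ∂γ := by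
  have hmul := integrable_fst_mul_snd h₁ h₂ hμ hν
  subst h₁ h₂
  have hfst : Integrable (fun p : ℝ × ℝ => p.1 ^ 2) γ := hμ.comp_measurable measurable_fst
  have hsnd : Integrable (fun p : ℝ × ℝ => p.2 ^ 2) γ := hν.comp_measurable measurable_snd
  simp_rw [Real.dist_eq, sq_abs, sub_sq', mul_assoc]
  rw [integral_sub (f := fun p => p.1 ^ 2 + p.2 ^ 2) (hfst.add hsnd) (hmul.const_mul 2),
    integral_add hfst hsnd, integral_const_mul,
    integral_map measurable_fst.aemeasurable (by fun_prop),
    integral_map measurable_snd.aemeasurable (by fun_prop)]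

end Cost

/-- 1D formula: `W₂²(μ,ν) = ∫₀¹ |F_μ⁻¹(t) − F_ν⁻¹(t)|² dt` for probability measures
on ℝ with finite second moments. -/
theorem stmt_1 (μ ν : Measure ℝ) [IsProbabilityMeasure μ] [IsProbabilityMeasure ν]
    (hμ : Integrable (fun x => x ^ 2) μ) (hν : Integrable (fun x => x ^ 2) ν) :
    W2sq μ ν = ∫ t in Set.Ioo (0 : ℝ) 1, |invCDF μ t - invCDF ν t| ^ 2 := by
  have hQ₁ := quantileCoupling_map_fst μ ν
  have hQ₂ := quantileCoupling_map_snd μ ν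
  rw [← integral_dist_sq_quantileCoupling]
  refine IsLeast.csInf_eq ⟨⟨_, hQ₁, hQ₂, rfl⟩, ?_⟩
  rintro _ ⟨γ, h₁, h₂, rfl⟩
  have : IsFiniteMeasure (γ.map Prod.fst) := h₁ ▸ inferInstance
  have : IsFiniteMeasure γ := Measure.isFiniteMeasure_of_map measurable_fst.aemeasurable
  have hxy := integral_mul_le_of_forall_Ioi_prod_Ioi_le (h₁.trans hQ₁.symm) (h₂.trans hQ₂.symm)
    (integrable_fst_mul_snd h₁ h₂ hμ hν) (integrable_fst_mul_snd hQ₁ hQ₂ hμ hν) fun s t => by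
      rw [quantileCoupling_Ioi_prod_Ioi, ← h₁, ← h₂]
      exact measure_prod_le_min_map measurableSet_Ioi measurableSet_Ioi
  rw [integral_dist_sq_eq_of_map h₁ h₂ hμ hν, integral_dist_sq_eq_of_map hQ₁ hQ₂ hμ hν]
  linarith
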